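/- Let U be the union of those connected components of A ∪ B (in the Dynkin graph on Π) that do not meet A, and set B′ = B \ U. Suppose every connected component of A ∪ B′ consists of simple roots of one and the same length. Then every (A,B′)-root is significant, and ℓ(A,B) equals the number of positive roots δ with C(δ) ⊆ A ∪ B′ minus the number of positive roots δ with C(δ) ⊆ B′. -/

import Mathlib

open scoped RealInnerProductSpace
open scoped Classical

/-- A reduced crystallographic root system `roots` spanning a real inner product
space `V`, with a chosen set `pos` of positive roots, the corresponding base
`simple` of simple roots, and the coefficient function `coeff`, where
`coeff ξ α = c_α(ξ)` is the coefficient of the simple root `α` in the unique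
expression `ξ = ∑_{α ∈ simple} c_α(ξ) • α`. -/
structure RootSystemData (V : Type*) [NormedAddCommGroup V] [InnerProductSpace ℝ V] where
  roots : Finset V
  pos : Finset V
  simple : Finset V
  coeff : V → V → ℝ
  pos_subset : pos ⊆ roots
  simple_subset : simple ⊆ pos
  root_ne_zero : ∀ δ ∈ roots, δ ≠ (0 : V)
  neg_mem : ∀ δ ∈ roots, -δ ∈ roots
  pos_or_neg : ∀ δ ∈ roots, δ ∈ pos ∨ -δ ∈ pos
  pos_neg_not : ∀ δ ∈ pos, -δ ∉ pos
  reduced : ∀ δ ∈ roots, ∀ t : ℝ, t • δ ∈ roots → t = 1 ∨ t = -1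
  crystallographic : ∀ δ ∈ roots, ∀ ε ∈ roots, ∃ n : ℤ, 2 * ⟪δ, ε⟫ / ⟪ε, ε⟫ = (n : ℝ)
  reflect_mem : ∀ δ ∈ roots, ∀ ε ∈ roots, δ - (2 * ⟪δ, ε⟫ / ⟪ε, ε⟫) • ε ∈ roots
  span_eq_top : Submodule.span ℝ (simple : Set V) = ⊤
  linearIndependent : LinearIndependent ℝ (fun α : simple => (α : V))
  coeff_spec : ∀ ξ : V, ξ = ∑ α ∈ simple, coeff ξ α • α
  pos_coeff_nonneg : ∀ δ ∈ pos, ∀ α ∈ simple, 0 ≤ coeff δ α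

namespace RootSystemData

variable {V : Type*} [NormedAddCommGroup V] [InnerProductSpace ℝ V]

/-- The support `C(ξ)` of `ξ`: the set of simple roots with nonzero coefficient in `ξ`. -/
noncomputable def support (R : RootSystemData V) (ξ : V) : Finset V :=
  R.simple.filter fun α => R.coeff ξ α ≠ 0

/-- The coefficientwise partial order: `x ≤ y` iff `c_α(x) ≤ c_α(y)` for all simple `α`. -/
def cle (R : RootSystemData V) (x y : V) : Prop :=
  ∀ α ∈ R.simple, R.coeff x α ≤ R.coeff y α

/-- An `(A,B)`-root: a positive root whose support lies in `A ∪ B` and which has a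
strictly positive coefficient at some element of `A`. -/
def IsABRoot (R : RootSystemData V) (A B : Finset V) (δ : V) : Prop :=
  δ ∈ R.pos ∧ R.support δ ⊆ A ∪ B ∧ ∃ α₀ ∈ A, 0 < R.coeff δ α₀

/-- A significant `(A,B)`-root. -/
def IsSignificant (R : RootSystemData V) (A B : Finset V) (δ : V) : Prop :=
  R.IsABRoot A B δ ∧ ∃ σ : V, R.IsABRoot A B σ ∧ R.cle σ δ ∧
    (∑ β ∈ B, R.coeff σ β * ⟪β, β⟫) ≤ (∑ α ∈ A, R.coeff σ α * ⟪α, α⟫) ∧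
    (∀ x ∈ R.support (δ - σ), ∀ y ∈ R.support (δ - σ), ‖x‖ = ‖y‖) ∧
    (∀ x ∈ R.support (δ - σ), ‖x‖ ≤ ‖σ‖)

/-- `ℓ(A,B)`, the number of significant `(A,B)`-roots. -/
noncomputable def ell (R : RootSystemData V) (A B : Finset V) : ℕ :=
  (R.pos.filter fun δ => R.IsSignificant A B δ).card

/-- `γ`, the half-sum of the positive roots. -/
noncomputable def gamma (R : RootSystemData V) : V :=
  (2 : ℝ)⁻¹ • ∑ δ ∈ R.pos, δ

/-- A weight: `2(β,α)/(α,α) ∈ ℤ` for all roots `α`. -/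
def IsWeight (R : RootSystemData V) (β : V) : Prop :=
  ∀ δ ∈ R.roots, ∃ n : ℤ, 2 * ⟪β, δ⟫ / ⟪δ, δ⟫ = (n : ℝ)

/-- A regular weight: not orthogonal to any positive root. -/
def IsRegular (R : RootSystemData V) (lam : V) : Prop :=
  ∀ δ ∈ R.pos, ⟪lam, δ⟫ ≠ 0

end RootSystemData


/-- `x` and `y` are connected within `S ⊆ Π` in the Dynkin graph (edges between simple
roots with nonzero inner product). -/
def RootSystemData.connTo {V : Type*} [NormedAddCommGroup V] [InnerProductSpace ℝ V]
    (R : RootSystemData V) (S : Finset V) (x y : V) : Prop :=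
  ∃ (k : ℕ) (p : ℕ → V), p 0 = x ∧ p k = y ∧ (∀ i ≤ k, p i ∈ S) ∧
    ∀ i < k, ⟪p i, p (i + 1)⟫ ≠ 0

/-!
Every positive root δ ∉ Π has a simple root α with (δ, α) > 0, and reflecting in α gives a
positive root ρ = δ - nα with n ≥ 1 and (ρ, α) ≠ 0. Descending along such steps shows that the
coefficients of positive roots are integers and that their supports are connected.

Consequently the support of an (A,B)-root meets A and is connected, so it avoids U: the
(A,B)-roots are exactly the (A,B′)-roots, and the support of each lies in one component of
A ∪ B′, so all its simple roots have one length. For such a root δ and α₀ ∈ A ∩ C(δ), the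
witness σ = α₀ shows that δ is significant, because c_{α₀}(δ) ≥ 1 by integrality. Finally,
the (A,B′)-roots are the positive roots supported in A ∪ B′ but not in B′.
-/

open Finset

namespace RootSystemData

variable {V : Type*} [NormedAddCommGroup V] [InnerProductSpace ℝ V] {R : RootSystemData V}

section Coefficients

theorem coeff_eq_of_eq_sum {ξ : V} {f : V → ℝ} (hf : ξ = ∑ α ∈ R.simple, f α • α)
    {β : V} (hβ : β ∈ R.simple) : R.coeff ξ β = f β :=
  (linearIndepOn_finset_iffₛ (v := id) (s := R.simple)).mp R.linearIndependent (R.coeff ξ) f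
    ((R.coeff_spec ξ).symm.trans hf) β hβ

theorem coeff_add (x y : V) {β : V} (hβ : β ∈ R.simple) :
    R.coeff (x + y) β = R.coeff x β + R.coeff y β :=
  coeff_eq_of_eq_sum (f := fun α => R.coeff x α + R.coeff y α)
    (by simp only [add_smul, sum_add_distrib, ← R.coeff_spec]) hβ

theorem coeff_smul (t : ℝ) (x : V) {β : V} (hβ : β ∈ R.simple) :
    R.coeff (t • x) β = t * R.coeff x β :=
  coeff_eq_of_eq_sum (f := fun α => t * R.coeff x α)
    (by simp only [mul_smul, ← smul_sum, ← R.coeff_spec]) hβ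

theorem coeff_neg (x : V) {β : V} (hβ : β ∈ R.simple) : R.coeff (-x) β = -R.coeff x β := by
  simpa using coeff_smul (-1) x hβ

theorem coeff_sub (x y : V) {β : V} (hβ : β ∈ R.simple) :
    R.coeff (x - y) β = R.coeff x β - R.coeff y β := by
  rw [sub_eq_add_neg, coeff_add _ _ hβ, coeff_neg _ hβ, sub_eq_add_neg]

theorem coeff_simple {α : V} (hα : α ∈ R.simple) {β : V} (hβ : β ∈ R.simple) :
    R.coeff α β = if β = α then 1 else 0 :=
  coeff_eq_of_eq_sum (f := fun β => if β = α then 1 else 0) (by simp [hα]) hβ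

theorem coeff_add_smul_simple (ρ : V) (t : ℝ) {α : V} (hα : α ∈ R.simple) {β : V}
    (hβ : β ∈ R.simple) :
    R.coeff (ρ + t • α) β = R.coeff ρ β + if β = α then t else 0 := by
  rw [coeff_add _ _ hβ, coeff_smul _ _ hβ, coeff_simple hα hβ]
  split_ifs <;> simp

theorem mem_support_iff {ξ α : V} : α ∈ R.support ξ ↔ α ∈ R.simple ∧ R.coeff ξ α ≠ 0 :=
  mem_filter

theorem support_simple {α : V} (hα : α ∈ R.simple) : R.support α = {α} := by
  ext β
  simp +contextual [mem_support_iff, coeff_simple hα, iff_def, hα]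

variable (R) in
noncomputable def height (ξ : V) : ℝ := ∑ α ∈ R.simple, R.coeff ξ α

theorem height_add_smul_simple (ρ : V) (t : ℝ) {α : V} (hα : α ∈ R.simple) :
    R.height (ρ + t • α) = R.height ρ + t := by
  simp only [height, sum_congr rfl fun β hβ => coeff_add_smul_simple ρ t hα hβ,
    sum_add_distrib, sum_ite_eq', if_pos hα]

theorem inner_eq_sum_coeff_mul (ξ x : V) :
    ⟪ξ, x⟫ = ∑ α ∈ R.simple, R.coeff ξ α * ⟪α, x⟫ := by
  conv_lhs => rw [R.coeff_spec ξ]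
  simp only [sum_inner, real_inner_smul_left]

end Coefficients

section PositiveRoots

theorem inner_self_pos {δ : V} (hδ : δ ∈ R.roots) : 0 < ⟪δ, δ⟫ :=
  real_inner_self_pos.2 (R.root_ne_zero δ hδ)

theorem mem_pos_of_coeff_pos {ρ β : V} (hρ : ρ ∈ R.roots) (hβ : β ∈ R.simple)
    (hpos : 0 < R.coeff ρ β) : ρ ∈ R.pos := by
  refine (R.pos_or_neg ρ hρ).resolve_right fun hneg => ?_
  have := R.pos_coeff_nonneg _ hneg β hβ
  rw [coeff_neg _ hβ] at this
  linarith

theorem exists_simple_inner_pos {δ : V} (hδ : δ ∈ R.pos) : ∃ α ∈ R.simple, 0 < ⟪δ, α⟫ := by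
  have hsum : ∑ α ∈ R.simple, (0 : ℝ) < ∑ α ∈ R.simple, R.coeff δ α * ⟪α, δ⟫ := by
    rw [sum_const_zero, ← inner_eq_sum_coeff_mul]
    exact inner_self_pos (R.pos_subset hδ)
  obtain ⟨α, hα, hprod⟩ := exists_lt_of_sum_lt hsum
  exact ⟨α, hα, real_inner_comm α δ ▸ pos_of_mul_pos_right hprod (R.pos_coeff_nonneg δ hδ α hα)⟩

theorem exists_coeff_pos_of_ne_simple {δ α : V} (hδ : δ ∈ R.pos) (hδs : δ ∉ R.simple)
    (hα : α ∈ R.simple) : ∃ β ∈ R.simple, β ≠ α ∧ 0 < R.coeff δ β := by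
  by_contra! hc
  have hδα : δ = R.coeff δ α • α := by
    conv_lhs => rw [R.coeff_spec δ]
    refine sum_eq_single α (fun β hβ hne => ?_) (absurd hα)
    rw [le_antisymm (hc β hβ hne) (R.pos_coeff_nonneg δ hδ β hβ), zero_smul]
  rcases R.reduced α (R.simple_subset.trans R.pos_subset hα) _ (hδα ▸ R.pos_subset hδ) with h | h
  · exact hδs (by rwa [hδα, h, one_smul])
  · exact R.pos_neg_not δ hδ (by rw [hδα, h, neg_one_smul, neg_neg]; exact R.simple_subset hα)

/-- `ρ` is the reflection of `δ` in a simple root `α` with `(δ, α) > 0`; it is positive because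
`δ ∉ Π` involves a simple root other than `α`. -/
theorem exists_eq_add_smul_simple {δ : V} (hδ : δ ∈ R.pos) (hδs : δ ∉ R.simple) :
    ∃ ρ ∈ R.pos, ∃ α ∈ R.simple, ∃ n : ℕ, 0 < n ∧ ⟪ρ, α⟫ ≠ 0 ∧ δ = ρ + (n : ℝ) • α := by
  obtain ⟨α, hα, hδα⟩ := exists_simple_inner_pos hδ
  have hαr : α ∈ R.roots := R.simple_subset.trans R.pos_subset hα
  have hδr : δ ∈ R.roots := R.pos_subset hδ
  obtain ⟨m, hm⟩ := R.crystallographic δ hδr α hαr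
  have hm_pos : (0 : ℝ) < m := hm ▸ div_pos (by linarith) (inner_self_pos hαr)
  obtain ⟨n, rfl⟩ := Int.eq_ofNat_of_zero_le (Int.cast_pos.mp hm_pos).le
  set ρ := δ - (n : ℝ) • α with hρ
  have hρr : ρ ∈ R.roots := by
    have := R.reflect_mem δ hδr α hαr
    rwa [hm, Int.cast_natCast] at this
  obtain ⟨β, hβ, hβα, hδβ⟩ := exists_coeff_pos_of_ne_simple hδ hδs hα
  have hρβ : R.coeff ρ β = R.coeff δ β := by
    rw [hρ, sub_eq_add_neg, ← neg_smul, coeff_add_smul_simple _ _ hα hβ, if_neg hβα, add_zero]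
  have hρα : ⟪ρ, α⟫ = -⟪δ, α⟫ := by
    have hαα := (inner_self_pos hαr).ne'
    rw [hρ, inner_sub_left, real_inner_smul_left, ← Int.cast_natCast, ← hm]
    field_simp
    ring
  refine ⟨ρ, mem_pos_of_coeff_pos hρr hβ (hρβ ▸ hδβ), α, hα, n, by exact_mod_cast hm_pos,
    by rw [hρα]; linarith, by rw [hρ, sub_add_cancel]⟩

theorem pos_induction {P : V → Prop} (simple : ∀ α ∈ R.simple, P α)
    (add : ∀ ρ ∈ R.pos, ∀ α ∈ R.simple, ∀ n : ℕ, 0 < n → ⟪ρ, α⟫ ≠ 0 →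
      P ρ → P (ρ + (n : ℝ) • α)) :
    ∀ δ ∈ R.pos, P δ := by
  intro δ hδ
  induction hk : #{ε ∈ R.pos | R.height ε < R.height δ} using Nat.strong_induction_on
    generalizing δ with
  | _ k ih =>
  by_cases hδs : δ ∈ R.simple
  · exact simple δ hδs
  obtain ⟨ρ, hρ, α, hα, n, hn, hρα, rfl⟩ := exists_eq_add_smul_simple hδ hδs
  have hlt : R.height ρ < R.height (ρ + (n : ℝ) • α) := by
    rw [height_add_smul_simple _ _ hα]
    exact lt_add_of_pos_right _ (Nat.cast_pos.mpr hn)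
  refine add ρ hρ α hα n hn hρα (ih _ ?_ ρ hρ rfl)
  rw [← hk]
  refine card_lt_card ((ssubset_iff_of_subset fun ε hε => ?_).2 ⟨ρ, ?_, ?_⟩)
  · simp only [mem_filter] at hε ⊢
    exact ⟨hε.1, hε.2.trans hlt⟩
  · exact mem_filter.mpr ⟨hρ, hlt⟩
  · simp

theorem exists_int_coeff {δ : V} (hδ : δ ∈ R.pos) {β : V} (hβ : β ∈ R.simple) :
    ∃ m : ℤ, R.coeff δ β = m := by
  refine pos_induction (P := fun δ => ∀ β ∈ R.simple, ∃ m : ℤ, R.coeff δ β = m)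
    (fun α hα β hβ => ?_) (fun ρ _ α hα n _ _ ih β hβ => ?_) δ hδ β hβ
  · exact ⟨if β = α then 1 else 0, by rw [coeff_simple hα hβ]; split_ifs <;> simp⟩
  · obtain ⟨m, hm⟩ := ih β hβ
    refine ⟨m + if β = α then n else 0, ?_⟩
    rw [coeff_add_smul_simple _ _ hα hβ, hm]
    split_ifs <;> simp

theorem one_le_coeff {δ β : V} (hδ : δ ∈ R.pos) (hβ : β ∈ R.simple)
    (hpos : 0 < R.coeff δ β) : 1 ≤ R.coeff δ β := by
  obtain ⟨m, hm⟩ := exists_int_coeff hδ hβ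
  rw [hm] at hpos ⊢
  exact_mod_cast (Int.cast_pos.mp hpos : 1 ≤ m)

end PositiveRoots

section Connectivity

theorem connTo_refl {S : Finset V} {x : V} (hx : x ∈ S) : R.connTo S x x :=
  ⟨0, fun _ => x, rfl, rfl, fun _ _ => hx, fun _ h => absurd h (Nat.not_lt_zero _)⟩

theorem connTo_mono {S T : Finset V} (hST : S ⊆ T) {x y : V} (h : R.connTo S x y) :
    R.connTo T x y :=
  let ⟨k, p, hp0, hpk, hpS, hadj⟩ := h
  ⟨k, p, hp0, hpk, fun i hi => hST (hpS i hi), hadj⟩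

theorem connTo_of_inner_ne_zero {S : Finset V} {x y : V} (hx : x ∈ S) (hy : y ∈ S)
    (hxy : ⟪x, y⟫ ≠ 0) : R.connTo S x y := by
  refine ⟨1, fun i => if i = 0 then x else y, by simp, by simp, fun i _ => ?_, fun i hi => ?_⟩
  · dsimp only
    split_ifs <;> assumption
  · obtain rfl : i = 0 := by omega
    simpa using hxy

theorem connTo_symm {S : Finset V} {x y : V} (h : R.connTo S x y) : R.connTo S y x := by
  obtain ⟨k, p, hp0, hpk, hpS, hadj⟩ := h
  refine ⟨k, fun i => p (k - i), by simpa, by simpa, fun i _ => hpS _ (Nat.sub_le _ _),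
    fun i hi => ?_⟩
  have hi' : k - i = k - (i + 1) + 1 := by omega
  simpa only [hi', real_inner_comm] using hadj (k - (i + 1)) (by omega)

theorem connTo_trans {S : Finset V} {x y z : V} (hxy : R.connTo S x y)
    (hyz : R.connTo S y z) : R.connTo S x z := by
  obtain ⟨k, p, hp0, hpk, hpS, hpadj⟩ := hxy
  obtain ⟨m, q, hq0, hqm, hqS, hqadj⟩ := hyz
  set r : ℕ → V := fun i => if i ≤ k then p i else q (i - k)
  have hr_left : ∀ i ≤ k, r i = p i := fun i hi => if_pos hi
  have hr_right : ∀ i, k ≤ i → r i = q (i - k) := by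
    intro i hi
    rcases hi.eq_or_lt with heq | hlt
    · rw [← heq, hr_left k le_rfl, hpk, Nat.sub_self, hq0]
    · exact if_neg (not_le.mpr hlt)
  refine ⟨k + m, r, by rw [hr_left 0 (Nat.zero_le k), hp0], ?_, fun i hi => ?_, fun i hi => ?_⟩
  · rw [hr_right _ (Nat.le_add_right k m), Nat.add_sub_cancel_left, hqm]
  · rcases le_total i k with h | h
    · exact hr_left i h ▸ hpS i h
    · exact hr_right i h ▸ hqS _ (by omega)
  · rcases lt_or_ge i k with h | h
    · rw [hr_left i h.le, hr_left (i + 1) h]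
      exact hpadj i h
    · rw [hr_right i h, hr_right (i + 1) (by omega), Nat.sub_add_comm h]
      exact hqadj _ (by omega)

variable (R) in
def IsDynkinConnected (S : Finset V) : Prop :=
  ∀ x ∈ S, ∀ y ∈ S, R.connTo S x y

theorem isDynkinConnected_singleton (α : V) : R.IsDynkinConnected {α} := by
  simp only [IsDynkinConnected, mem_singleton, forall_eq]
  exact connTo_refl (mem_singleton_self α)

theorem isDynkinConnected_insert {S : Finset V} (hS : R.IsDynkinConnected S) {a γ : V}
    (hγ : γ ∈ S) (hγa : ⟪γ, a⟫ ≠ 0) : R.IsDynkinConnected (insert a S) := by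
  have hto_a : ∀ x ∈ insert a S, R.connTo (insert a S) x a := by
    intro x hx
    rcases mem_insert.mp hx with rfl | hx
    · exact connTo_refl (mem_insert_self x S)
    · exact connTo_trans (connTo_mono (subset_insert a S) (hS x hx γ hγ))
        (connTo_of_inner_ne_zero (mem_insert_of_mem hγ) (mem_insert_self a S) hγa)
  exact fun x hx y hy => connTo_trans (hto_a x hx) (connTo_symm (hto_a y hy))

theorem support_add_smul_simple {ρ α : V} (hρ : ρ ∈ R.pos) (hα : α ∈ R.simple) {t : ℝ}
    (ht : 0 < t) : R.support (ρ + t • α) = insert α (R.support ρ) := by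
  ext β
  simp only [mem_insert, mem_support_iff]
  by_cases hβα : β = α
  · subst hβα
    rw [coeff_add_smul_simple _ _ hα hα, if_pos rfl]
    simpa [hα] using (add_pos_of_nonneg_of_pos (R.pos_coeff_nonneg ρ hρ β hα) ht).ne'
  · simp only [hβα, false_or]
    refine and_congr_right fun hβ => ?_
    rw [coeff_add_smul_simple _ _ hα hβ, if_neg hβα, add_zero]

theorem exists_mem_support_inner_ne_zero {ρ x : V} (h : ⟪ρ, x⟫ ≠ 0) :
    ∃ γ ∈ R.support ρ, ⟪γ, x⟫ ≠ 0 := by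
  rw [inner_eq_sum_coeff_mul] at h
  obtain ⟨γ, hγ, hne⟩ := exists_ne_zero_of_sum_ne_zero h
  exact ⟨γ, mem_support_iff.mpr ⟨hγ, left_ne_zero_of_mul hne⟩, right_ne_zero_of_mul hne⟩

theorem isDynkinConnected_support {δ : V} (hδ : δ ∈ R.pos) :
    R.IsDynkinConnected (R.support δ) := by
  refine pos_induction (P := fun δ => R.IsDynkinConnected (R.support δ))
    (fun α hα => ?_) (fun ρ hρ α hα n hn hρα ih => ?_) δ hδ
  · simpa only [support_simple hα] using isDynkinConnected_singleton α
  · obtain ⟨γ, hγ, hγα⟩ := exists_mem_support_inner_ne_zero hρα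
    rw [support_add_smul_simple hρ hα (Nat.cast_pos.mpr hn)]
    exact isDynkinConnected_insert ih hγ hγα

end Connectivity

section ABRoots

variable {A B : Finset V}

variable (R) in
/-- The set `U`: the union of the components of `A ∪ B` that do not meet `A`. -/
noncomputable def detached (A B : Finset V) : Finset V :=
  (A ∪ B).filter fun x => ¬ ∃ a ∈ A, R.connTo (A ∪ B) x a

theorem isABRoot_sdiff_detached_iff (hA : A ⊆ R.simple) {δ : V} :
    R.IsABRoot A (B \ R.detached A B) δ ↔ R.IsABRoot A B δ := by
  refine ⟨fun ⟨hδ, hsupp, hα₀⟩ =>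
    ⟨hδ, hsupp.trans (union_subset_union_right sdiff_subset), hα₀⟩, ?_⟩
  rintro ⟨hδ, hsupp, α₀, hα₀A, hpos⟩
  refine ⟨hδ, fun x hx => ?_, α₀, hα₀A, hpos⟩
  have hα₀ : α₀ ∈ R.support δ := mem_support_iff.mpr ⟨hA hα₀A, hpos.ne'⟩
  have hconn : R.connTo (A ∪ B) x α₀ :=
    connTo_mono hsupp (isDynkinConnected_support hδ x hx α₀ hα₀)
  rcases mem_union.mp (hsupp hx) with hxA | hxB
  · exact mem_union_left _ hxA
  · refine mem_union_right _ (mem_sdiff.mpr ⟨hxB, fun hxU => ?_⟩)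
    exact (mem_filter.mp hxU).2 ⟨α₀, hα₀A, hconn⟩

theorem isABRoot_simple {α : V} (hα : α ∈ R.simple) (hαA : α ∈ A) : R.IsABRoot A B α := by
  refine ⟨R.simple_subset hα, ?_, α, hαA, ?_⟩
  · rw [support_simple hα, singleton_subset_iff]
    exact mem_union_left _ hαA
  · rw [coeff_simple hα hα, if_pos rfl]
    exact one_pos

theorem cle_of_coeff_pos {δ α : V} (hδ : δ ∈ R.pos) (hα : α ∈ R.simple) (hpos : 0 < R.coeff δ α) :
    R.cle α δ := by
  intro β hβ
  rw [coeff_simple hα hβ]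
  split_ifs with h
  · exact h ▸ one_le_coeff hδ hα hpos
  · exact R.pos_coeff_nonneg δ hδ β hβ

theorem support_sub_subset {δ α : V} (hα : α ∈ R.support δ) :
    R.support (δ - α) ⊆ R.support δ := by
  intro β hβ
  obtain ⟨hβs, hβc⟩ := mem_support_iff.mp hβ
  by_cases hβα : β = α
  · exact hβα ▸ hα
  · refine mem_support_iff.mpr ⟨hβs, ?_⟩
    rwa [coeff_sub _ _ hβs, coeff_simple (mem_support_iff.mp hα).1 hβs, if_neg hβα,
      sub_zero] at hβc

theorem isSignificant_of_norm_eq (hA : A ⊆ R.simple) (hB : B ⊆ R.simple) (hAB : Disjoint A B)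
    {δ : V} (hδ : R.IsABRoot A B δ)
    (hnorm : ∀ x ∈ R.support δ, ∀ y ∈ R.support δ, ‖x‖ = ‖y‖) : R.IsSignificant A B δ := by
  obtain ⟨α₀, hα₀A, hpos⟩ := hδ.2.2
  have hα₀ : α₀ ∈ R.simple := hA hα₀A
  have hα₀δ : α₀ ∈ R.support δ := mem_support_iff.mpr ⟨hα₀, hpos.ne'⟩
  have hsub := support_sub_subset hα₀δ
  have hsumB : ∑ β ∈ B, R.coeff α₀ β * ⟪β, β⟫ = 0 := sum_eq_zero fun β hβ => by
    have hβα₀ : β ≠ α₀ := fun h => disjoint_left.mp hAB hα₀A (h ▸ hβ)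
    rw [coeff_simple hα₀ (hB hβ), if_neg hβα₀, zero_mul]
  have hsumA : ∑ α ∈ A, R.coeff α₀ α * ⟪α, α⟫ = ⟪α₀, α₀⟫ := by
    rw [sum_eq_single_of_mem α₀ hα₀A fun β hβ hne => by
      rw [coeff_simple hα₀ (hA hβ), if_neg hne, zero_mul], coeff_simple hα₀ hα₀, if_pos rfl,
      one_mul]
  refine ⟨hδ, α₀, isABRoot_simple hα₀ hα₀A, cle_of_coeff_pos hδ.1 hα₀ hpos,
    hsumB ▸ hsumA ▸ real_inner_self_nonneg, fun x hx y hy => hnorm x (hsub hx) y (hsub hy),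
    fun x hx => (hnorm x (hsub hx) α₀ hα₀δ).le⟩

theorem norm_eq_of_isABRoot
    (hlen : ∀ x ∈ A ∪ B, ∀ y ∈ A ∪ B, R.connTo (A ∪ B) x y → ‖x‖ = ‖y‖) {δ : V}
    (hδ : R.IsABRoot A B δ) : ∀ x ∈ R.support δ, ∀ y ∈ R.support δ, ‖x‖ = ‖y‖ :=
  fun x hx y hy => hlen x (hδ.2.1 hx) y (hδ.2.1 hy)
    (connTo_mono hδ.2.1 (isDynkinConnected_support hδ.1 x hx y hy))

theorem card_filter_isABRoot (hA : A ⊆ R.simple) (hAB : Disjoint A B) :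
    #{δ ∈ R.pos | R.IsABRoot A B δ} =
      #{δ ∈ R.pos | R.support δ ⊆ A ∪ B} - #{δ ∈ R.pos | R.support δ ⊆ B} := by
  rw [← card_sdiff_of_subset (monotone_filter_right _ fun _ _ h => h.trans subset_union_right)]
  congr 1
  ext δ
  simp only [mem_sdiff, mem_filter]
  constructor
  · rintro ⟨hδ, -, hsupp, α₀, hα₀A, hpos⟩
    exact ⟨⟨hδ, hsupp⟩, fun ⟨_, hsuppB⟩ => disjoint_left.mp hAB hα₀A
      (hsuppB (mem_support_iff.mpr ⟨hA hα₀A, hpos.ne'⟩))⟩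
  · rintro ⟨⟨hδ, hsupp⟩, hnot⟩
    obtain ⟨x, hx, hxB⟩ := not_subset.mp fun h => hnot ⟨hδ, h⟩
    obtain ⟨hxs, hxc⟩ := mem_support_iff.mp hx
    exact ⟨hδ, hδ, hsupp, x, (mem_union.mp (hsupp hx)).resolve_right hxB,
      (R.pos_coeff_nonneg δ hδ x hxs).lt_of_ne' hxc⟩

end ABRoots

end RootSystemData

open RootSystemData

/-- Let `U` be the union of the connected components of `A ∪ B` not meeting `A` and
`B′ = B \\ U`.  If every connected component of `A ∪ B′` consists of simple roots of one
and the same length, then every `(A,B′)`-root is significant, and `ℓ(A,B)` equals the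
number of positive roots with support in `A ∪ B′` minus the number of positive roots with
support in `B′`. -/
theorem ell_eq_card_sub_card
    {V : Type*} [NormedAddCommGroup V] [InnerProductSpace ℝ V]
    (R : RootSystemData V)
    (A B : Finset V) (hA : A ⊆ R.simple) (hB : B ⊆ R.simple) (hAB : Disjoint A B)
    (U B' : Finset V)
    (hU : U = (A ∪ B).filter fun x => ¬ ∃ a ∈ A, R.connTo (A ∪ B) x a)
    (hB' : B' = B \ U)
    (hlen : ∀ x ∈ A ∪ B', ∀ y ∈ A ∪ B', R.connTo (A ∪ B') x y → ‖x‖ = ‖y‖) :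
    (∀ δ : V, R.IsABRoot A B' δ → R.IsSignificant A B' δ) ∧
    R.ell A B = (R.pos.filter fun δ => R.support δ ⊆ A ∪ B').card
      - (R.pos.filter fun δ => R.support δ ⊆ B').card := by
  obtain rfl : U = R.detached A B := hU
  subst hB'
  have hAB' : Disjoint A (B \ R.detached A B) := hAB.mono_right sdiff_subset
  refine ⟨fun δ hδ => isSignificant_of_norm_eq hA (sdiff_subset.trans hB) hAB' hδ
    (norm_eq_of_isABRoot hlen hδ), ?_⟩
  have hsig : ∀ δ, R.IsSignificant A B δ ↔ R.IsABRoot A (B \ R.detached A B) δ := fun δ =>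
    ⟨fun h => (isABRoot_sdiff_detached_iff hA).2 h.1, fun h => isSignificant_of_norm_eq hA hB hAB
      ((isABRoot_sdiff_detached_iff hA).1 h) (norm_eq_of_isABRoot hlen h)⟩
  rw [ell, Finset.filter_congr fun δ _ => hsig δ, card_filter_isABRoot hA hAB']
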